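/- arXiv:2507.19345 — 8 statements merged into one kernel-verified Lean document; each statement's English description precedes it below -/
import Mathlib

section
/- (Duhamel's principle.) Let A be a Hermitian matrix in Matrix (Fin N) (Fin N) ℂ and let B : [0, T] → Matrix (Fin N) (Fin N) ℂ be continuous with B(t) Hermitian for all t. Let U(t) solve U'(t) = -i (A + B(t)) U(t), U(0) = 1. Then for every t ∈ [0, T], U(t) = exp(-i t A) - i ∫₀ᵗ exp(-i (t - s) A) · B(s) · U(s) ds. -/
open scoped Matrix.Norms.L2Operator
open Matrix

/-- **Duhamel's principle.** If `U` solves `U' t = -i (A + B t) U t`, `U 0 = 1`, with `A`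
Hermitian and `B` continuous Hermitian-valued on `[0, T]`, then for `t ∈ [0, T]`,
`U t = exp(-itA) - i ∫₀ᵗ exp(-i(t-s)A) B(s) U(s) ds`. -/
theorem duhamel_principle
    (N : ℕ) (T : ℝ) (hT : 0 ≤ T)
    (A : Matrix (Fin N) (Fin N) ℂ) (hA : A.IsHermitian)
    (B : ℝ → Matrix (Fin N) (Fin N) ℂ)
    (hBcont : ContinuousOn B (Set.Icc (0 : ℝ) T))
    (hBherm : ∀ t ∈ Set.Icc (0 : ℝ) T, (B t).IsHermitian)
    (U : ℝ → Matrix (Fin N) (Fin N) ℂ) (hU0 : U 0 = 1)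
    (hode : ∀ t ∈ Set.Icc (0 : ℝ) T,
      HasDerivWithinAt U ((-Complex.I) • ((A + B t) * U t)) (Set.Icc (0 : ℝ) T) t) :
    ∀ t ∈ Set.Icc (0 : ℝ) T,
      U t = NormedSpace.exp ((-Complex.I * (t : ℂ)) • A)
        - Complex.I • ∫ s in (0 : ℝ)..t,
            NormedSpace.exp ((-Complex.I * ((t - s : ℝ) : ℂ)) • A) * (B s * U s) := by
  intro t ht
  obtain ⟨ht0, htT⟩ := ht
  set E : ℝ → Matrix (Fin N) (Fin N) ℂ :=
    fun s => NormedSpace.exp ((-Complex.I * ((t - s : ℝ) : ℂ)) • A) with hEdef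
  have hUcont : ContinuousOn U (Set.Icc 0 T) :=
    fun s hs => (hode s hs).continuousWithinAt
  have hEcont : Continuous E := by
    letI : NormedAlgebra ℚ (Matrix (Fin N) (Fin N) ℂ) := NormedAlgebra.restrictScalars ℚ ℂ _
    apply NormedSpace.exp_continuous.comp
    fun_prop
  -- derivative of E * U on the open interval
  have key : ∀ s ∈ Set.Ioo (0 : ℝ) t,
      HasDerivAt (fun s => E s * U s) ((-Complex.I) • (E s * (B s * U s))) s := by
    intro s hs
    have hsT : s ∈ Set.Icc (0 : ℝ) T := ⟨hs.1.le, hs.2.le.trans htT⟩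
    have hmem : Set.Icc (0 : ℝ) T ∈ nhds s :=
      Icc_mem_nhds hs.1 (lt_of_lt_of_le hs.2 htT)
    have hU : HasDerivAt U ((-Complex.I) • ((A + B s) * U s)) s :=
      (hode s hsT).hasDerivAt hmem
    -- derivative of the scalar function
    have hc : HasDerivAt (fun s : ℝ => -Complex.I * ((t - s : ℝ) : ℂ)) Complex.I s := by
      have h1 : HasDerivAt (fun s : ℝ => ((s : ℂ))) 1 s := by
        simpa using (hasDerivAt_id s).ofReal_comp
      have h2 : HasDerivAt (fun s : ℝ => -Complex.I * (t : ℂ) + Complex.I * (s : ℂ))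
          Complex.I s := by
        simpa using (h1.const_mul Complex.I).const_add (-Complex.I * (t : ℂ))
      convert h2 using 1
      funext x
      push_cast
      ring
    have hg : HasDerivAt (fun z : ℂ => NormedSpace.exp (z • A))
        (NormedSpace.exp ((-Complex.I * ((t - s : ℝ) : ℂ)) • A) * A)
        (-Complex.I * ((t - s : ℝ) : ℂ)) :=
      hasDerivAt_exp_smul_const A _
    have hE' : HasDerivAt E (Complex.I • (E s * A)) s := by
      have := hg.scomp s hc
      exact this
    have hprod : HasDerivAt (fun s => E s * U s)
        (Complex.I • (E s * A) * U s + E s * ((-Complex.I) • ((A + B s) * U s))) s := by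
      have := hE'.mul hU
      exact this
    convert hprod using 1
    have : E s * ((-Complex.I) • ((A + B s) * U s))
        = (-Complex.I) • (E s * (A * U s)) + (-Complex.I) • (E s * (B s * U s)) := by
      rw [mul_smul_comm, add_mul, mul_add, smul_add]
    rw [this, smul_mul_assoc, mul_assoc]
    module
  have hIcc : Set.Icc (0 : ℝ) t ⊆ Set.Icc (0 : ℝ) T := Set.Icc_subset_Icc le_rfl htT
  have hcontEU : ContinuousOn (fun s => E s * U s) (Set.Icc 0 t) :=
    hEcont.continuousOn.mul (hUcont.mono hIcc)
  have hcontI : ContinuousOn (fun s => (-Complex.I) • (E s * (B s * U s))) (Set.Icc 0 t) :=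
    by
      have := (hEcont.continuousOn.mul ((hBcont.mono hIcc).mul (hUcont.mono hIcc))).const_smul
        (-Complex.I)
      exact this
  have hint : IntervalIntegrable (fun s => (-Complex.I) • (E s * (B s * U s)))
      MeasureTheory.volume 0 t := by
    apply ContinuousOn.intervalIntegrable
    rwa [Set.uIcc_of_le ht0]
  have hFTC := intervalIntegral.integral_eq_sub_of_hasDeriv_right_of_le ht0 hcontEU
    (fun s hs => (key s hs).hasDerivWithinAt) hint
  have hEt : E t = 1 := by
    simp [hEdef, NormedSpace.exp_zero]
  have hE0 : E 0 = NormedSpace.exp ((-Complex.I * (t : ℂ)) • A) := by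
    simp [hEdef]
  rw [hEt, hE0, one_mul, hU0, mul_one, intervalIntegral.integral_smul] at hFTC
  rw [neg_smul] at hFTC
  rw [eq_sub_iff_add_eq] at hFTC
  rw [← hFTC]
  abel
end

section
/- Let M, N ≥ 1, let H_0, …, H_{M-1} be Hermitian matrices in Matrix (Fin N) (Fin N) ℂ, let δ > 0, let H_sys := ∑_{j} (|j⟩⟨j|) ⊗ H_j on ℂ^M ⊗ ℂ^N, and let S be the cyclic shift on ℂ^M with S(e_j) = e_{(j+1) mod M}. Then for every ψ ∈ ℂ^N, ((S ⊗ 1) · exp(-i δ H_sys))^M (e_0 ⊗ ψ) = e_0 ⊗ (exp(-i δ H_{M-1}) · exp(-i δ H_{M-2}) ⋯ exp(-i δ H_0)) ψ. -/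
open scoped Matrix.Norms.L2Operator Kronecker
open Matrix
open Fin.NatCast

section Aux

open NormedSpace

/-- Kronecker product acts factorwise on product vectors. -/
lemma kron_mulVec_prod {M N : ℕ} (A : Matrix (Fin M) (Fin M) ℂ)
    (B : Matrix (Fin N) (Fin N) ℂ) (u : Fin M → ℂ) (v : Fin N → ℂ) :
    (A ⊗ₖ B).mulVec (fun p : Fin M × Fin N => u p.1 * v p.2)
      = fun p => A.mulVec u p.1 * B.mulVec v p.2 := by
  funext ⟨i, a⟩
  simp only [Matrix.mulVec, dotProduct, Fintype.sum_prod_type,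
    Matrix.kroneckerMap_apply]
  rw [Finset.sum_mul_sum]
  refine Finset.sum_congr rfl fun j _ => Finset.sum_congr rfl fun b _ => by ring

lemma exp_entries {M N : ℕ} [NeZero M] [NeZero N]
    (H : Fin M → Matrix (Fin N) (Fin N) ℂ) (c : ℂ)
    (Hsys : Matrix (Fin M × Fin N) (Fin M × Fin N) ℂ)
    (hsys : Hsys = ∑ j : Fin M, Matrix.single j j (1 : ℂ) ⊗ₖ H j) :
    exp (c • Hsys) = fun p q : Fin M × Fin N =>
      if p.1 = q.1 then exp (c • H p.1) p.2 q.2 else 0 := by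
  set e : (Fin N × Fin M) ≃ (Fin M × Fin N) := Equiv.prodComm _ _ with he
  have h1 : c • Hsys = reindexAlgEquiv ℂ ℂ e (blockDiagonal fun j => c • H j) := by
    funext ⟨j, a⟩ ⟨k, b⟩
    simp only [hsys, reindexAlgEquiv_apply, reindex_apply, submatrix_apply, he,
      Equiv.prodComm_symm, Equiv.prodComm_apply, Prod.swap, blockDiagonal_apply,
      Matrix.smul_apply, Matrix.sum_apply, Matrix.kroneckerMap_apply,
      Matrix.single, Matrix.of_apply, Pi.smul_apply]
    by_cases h : j = k
    · subst h
      simp [Finset.mul_sum, Finset.sum_ite_eq', and_comm]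
    · simp [h, Ne.symm h, fun i => show ¬(i = j ∧ i = k) from fun ⟨h1, h2⟩ => h (h1 ▸ h2 ▸ rfl)]
  have hcont : Continuous (reindexAlgEquiv ℂ ℂ e) := by
    show Continuous fun A : Matrix (Fin N × Fin M) (Fin N × Fin M) ℂ =>
      A.submatrix e.symm e.symm
    exact continuous_id.matrix_submatrix _ _
  letI : NormedAlgebra ℚ (Matrix (Fin N × Fin M) (Fin N × Fin M) ℂ) :=
    NormedAlgebra.restrictScalars ℚ ℂ _
  letI : NormedAlgebra ℚ (Matrix (Fin N) (Fin N) ℂ) :=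
    NormedAlgebra.restrictScalars ℚ ℂ _
  rw [h1, ← map_exp (reindexAlgEquiv ℂ ℂ e) hcont, Matrix.exp_blockDiagonal]
  funext ⟨j, a⟩ ⟨k, b⟩
  simp only [reindexAlgEquiv_apply, reindex_apply, submatrix_apply, he,
    Equiv.prodComm_symm, Equiv.prodComm_apply, Prod.swap, blockDiagonal_apply,
    Pi.coe_exp]

end Aux

/-- **The discrete clock construction reproduces the time-ordered product.**
Alternating the controlled evolution `exp(-i δ H_sys)`, `H_sys = ∑ j, |j⟩⟨j| ⊗ H_j`, with the
clock advance `S ⊗ 1` for `M` rounds, starting from clock state `e_0`, applies the ordered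
product `exp(-i δ H_{M-1}) ⋯ exp(-i δ H_0)` to the system register. -/
theorem discrete_clock_time_ordered_product
    (M N : ℕ) [NeZero M] [NeZero N]
    (H : Fin M → Matrix (Fin N) (Fin N) ℂ) (hH : ∀ j, (H j).IsHermitian)
    (δ : ℝ) (hδ : 0 < δ)
    (Hsys : Matrix (Fin M × Fin N) (Fin M × Fin N) ℂ)
    (hsys : Hsys = ∑ j : Fin M, Matrix.single j j (1 : ℂ) ⊗ₖ H j)
    (S : Matrix (Fin M) (Fin M) ℂ)
    (hS : ∀ j : Fin M, S.mulVec (Pi.single j 1) = Pi.single (j + 1) 1)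
    (ψ : Fin N → ℂ) :
    (((S ⊗ₖ (1 : Matrix (Fin N) (Fin N) ℂ)) *
        NormedSpace.exp ((-Complex.I * (δ : ℂ)) • Hsys)) ^ M).mulVec
      (fun p : Fin M × Fin N => (Pi.single (0 : Fin M) (1 : ℂ) : Fin M → ℂ) p.1 * ψ p.2)
    = fun p : Fin M × Fin N =>
        (Pi.single (0 : Fin M) (1 : ℂ) : Fin M → ℂ) p.1 *
          ((List.ofFn fun j : Fin M =>
              NormedSpace.exp ((-Complex.I * (δ : ℂ)) • H j)).reverse.prod.mulVec ψ) p.2 := by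
  set c : ℂ := -Complex.I * (δ : ℂ) with hc
  set f : Fin M → Matrix (Fin N) (Fin N) ℂ := fun j => NormedSpace.exp (c • H j) with hf
  set U : Matrix (Fin M × Fin N) (Fin M × Fin N) ℂ :=
    (S ⊗ₖ (1 : Matrix (Fin N) (Fin N) ℂ)) * NormedSpace.exp (c • Hsys) with hU
  have hE := exp_entries H c Hsys hsys
  -- the one-step lemma
  have step : ∀ (j : Fin M) (v : Fin N → ℂ),
      U.mulVec (fun p : Fin M × Fin N => (Pi.single j (1:ℂ) : Fin M → ℂ) p.1 * v p.2)
        = fun p => (Pi.single (j+1) (1:ℂ) : Fin M → ℂ) p.1 * ((f j).mulVec v) p.2 := by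
    intro j v
    rw [hU, ← Matrix.mulVec_mulVec]
    have hEv : (NormedSpace.exp (c • Hsys)).mulVec
        (fun p : Fin M × Fin N => (Pi.single j (1:ℂ) : Fin M → ℂ) p.1 * v p.2)
        = fun p => (Pi.single j (1:ℂ) : Fin M → ℂ) p.1 * ((f j).mulVec v) p.2 := by
      funext ⟨i, a⟩
      simp only [Matrix.mulVec, dotProduct, Fintype.sum_prod_type, hE]
      by_cases h : i = j
      · subst h
        simp [Finset.mul_sum, hf, mul_assoc]
      · simp only [Pi.single_apply, h, if_false, zero_mul]
        refine Finset.sum_eq_zero fun k _ => Finset.sum_eq_zero fun b _ => ?_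
        by_cases hk : i = k
        · subst hk; simp [Ne.symm, h]
        · simp [hk]
    rw [hEv, kron_mulVec_prod, hS j]
    funext ⟨i, a⟩
    simp [Matrix.one_mulVec]
  -- induction
  have main : ∀ k : ℕ, k ≤ M →
      (U ^ k).mulVec (fun p : Fin M × Fin N =>
          (Pi.single (0 : Fin M) (1:ℂ) : Fin M → ℂ) p.1 * ψ p.2)
      = fun p => (Pi.single ((k : Fin M)) (1:ℂ) : Fin M → ℂ) p.1 *
          (((List.ofFn f).take k).reverse.prod.mulVec ψ) p.2 := by
    intro k hk
    induction k with
    | zero => rw [pow_zero, Matrix.one_mulVec, Nat.cast_zero]; simp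
    | succ k ih =>
      have hkM : k < M := hk
      rw [pow_succ', ← Matrix.mulVec_mulVec, ih (le_of_lt hkM), step]
      have htake : ((List.ofFn f).take (k+1)).reverse.prod
          = f ((k : Fin M)) * ((List.ofFn f).take k).reverse.prod := by
        have hget : (List.ofFn f)[k]? = some (f ⟨k, hkM⟩) := by
          rw [List.getElem?_eq_getElem (by simpa using hkM)]
          simp
        rw [List.take_succ, hget]
        have : ((k : ℕ) : Fin M) = ⟨k, hkM⟩ := by
          ext; simp [Fin.val_cast_of_lt hkM]
        simp [this]
      have hcast : ((k : Fin M) + 1) = (((k+1 : ℕ)) : Fin M) := by push_cast; ring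
      rw [htake, hcast]
      funext ⟨i, a⟩
      simp [Matrix.mulVec_mulVec]
  have := main M le_rfl
  rw [this]
  have h1 : ((M : ℕ) : Fin M) = 0 := by
    simpa using (Fin.natCast_self M)
  have h2 : (List.ofFn f).take M = List.ofFn f :=
    List.take_of_length_le (by simp)
  rw [h1, h2]
end

section
/- Let H : [0, T] → Matrix (Fin N) (Fin N) ℂ be continuous with H(t) Hermitian for all t, and suppose H is Lipschitz: ‖H(s) - H(t)‖ ≤ L |s - t| for all s, t ∈ [0, T]. Let U(t₂, t₁) be the evolution operator of H. Then for every t ∈ [0, T] and δ > 0 with t + δ ≤ T, ‖U(t + δ, t) - exp(-i δ H(t))‖ ≤ L δ² / 2, where ‖·‖ is the operator norm. -/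
open scoped Matrix.Norms.L2Operator
open Matrix

/-- **Short-time error of the frozen-Hamiltonian approximation.** For a Lipschitz,
continuous Hermitian-valued `H` on `[0, T]` with two-parameter evolution operator `U`,
`‖U (t+δ) t - exp(-i δ H(t))‖ ≤ L δ² / 2` whenever `t ∈ [0, T]`, `δ > 0`, `t + δ ≤ T`. -/
theorem short_time_frozen_hamiltonian_error
    (N : ℕ) (T L : ℝ) (hT : 0 ≤ T)
    (H : ℝ → Matrix (Fin N) (Fin N) ℂ)
    (hHcont : ContinuousOn H (Set.Icc (0 : ℝ) T))
    (hHherm : ∀ t ∈ Set.Icc (0 : ℝ) T, (H t).IsHermitian)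
    (hLip : ∀ s ∈ Set.Icc (0 : ℝ) T, ∀ t ∈ Set.Icc (0 : ℝ) T, ‖H s - H t‖ ≤ L * |s - t|)
    (U : ℝ → ℝ → Matrix (Fin N) (Fin N) ℂ)
    (hinit : ∀ s ∈ Set.Icc (0 : ℝ) T, U s s = 1)
    (hode : ∀ s ∈ Set.Icc (0 : ℝ) T, ∀ t ∈ Set.Icc (0 : ℝ) T,
      HasDerivWithinAt (fun τ => U τ s) ((-Complex.I) • (H t * U t s))
        (Set.Icc (0 : ℝ) T) t)
    (t δ : ℝ) (ht : t ∈ Set.Icc (0 : ℝ) T) (hδ : 0 < δ) (htδ : t + δ ≤ T) :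
    ‖U (t + δ) t - NormedSpace.exp ((-Complex.I * (δ : ℂ)) • H t)‖ ≤ L * δ ^ 2 / 2 := by
  have ht0 : 0 ≤ t := ht.1
  have htT : t ≤ T := ht.2
  have hTpos : 0 < T := lt_of_lt_of_le (by linarith) htδ
  have hL : 0 ≤ L := by
    have h := hLip 0 ⟨le_rfl, hT⟩ T ⟨hT, le_rfl⟩
    have h2 : (0 : ℝ) ≤ L * |0 - T| := le_trans (norm_nonneg _) h
    rw [zero_sub, abs_neg, abs_of_pos hTpos] at h2
    nlinarith
  rcases Nat.eq_zero_or_pos N with hN | hN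
  · subst hN
    have hz : U (t + δ) t - NormedSpace.exp ((-Complex.I * (δ : ℂ)) • H t) = 0 := by
      ext i j; exact i.elim0
    rw [hz, norm_zero]
    positivity
  haveI : NeZero N := ⟨hN.ne'⟩
  set A := H t with hAdef
  have hherm : A.IsHermitian := hHherm t ht
  -- star and inverse of exponentials of multiples of `A`
  have hstar : ∀ z : ℂ, star (NormedSpace.exp (z • A))
      = NormedSpace.exp ((starRingEnd ℂ z) • A) := by
    intro z
    rw [NormedSpace.star_exp, star_smul, star_eq_conjTranspose, hherm.eq]; rfl
  have hinv : ∀ z : ℂ, NormedSpace.exp ((-z) • A) * NormedSpace.exp (z • A) = 1 := by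
    intro z
    rw [← Matrix.exp_add_of_commute _ _ (((Commute.refl A).smul_left (-z)).smul_right z),
      ← add_smul]
    simp
  have hnorm1 : ∀ z : ℂ, starRingEnd ℂ z = -z → ‖NormedSpace.exp (z • A)‖ = 1 := by
    intro z hz
    have h1 : star (NormedSpace.exp (z • A)) * NormedSpace.exp (z • A) = 1 := by
      rw [hstar, hz, hinv]
    have h2 : ‖NormedSpace.exp (z • A)‖ * ‖NormedSpace.exp (z • A)‖ = 1 := by
      rw [← CStarRing.norm_star_mul_self, h1, CStarRing.norm_one]
    nlinarith [norm_nonneg (NormedSpace.exp (z • A))]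
  -- `U · t` is unitary on `[t, T]`
  have hgder : ∀ τ ∈ Set.Icc (0 : ℝ) T,
      HasDerivWithinAt (fun σ => star (U σ t) * U σ t) 0 (Set.Icc (0 : ℝ) T) τ := by
    intro τ hτ
    have hf := hode t ht τ hτ
    have hfs : HasDerivWithinAt (fun σ => star (U σ t))
        (star ((-Complex.I) • (H τ * U τ t))) (Set.Icc (0 : ℝ) T) τ := hf.star
    have hmul := hfs.mul hf
    have heq : star ((-Complex.I) • (H τ * U τ t)) * U τ t
        + star (U τ t) * ((-Complex.I) • (H τ * U τ t)) = 0 := by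
      have hHe : star (H τ) = H τ := by
        rw [star_eq_conjTranspose]; exact (hHherm τ hτ).eq
      rw [star_smul, StarMul.star_mul, hHe]
      have hsI : star (-Complex.I) = Complex.I := by simp
      rw [hsI, smul_mul_assoc, mul_assoc, mul_smul_comm, neg_smul, add_neg_cancel]
    exact heq ▸ hmul
  have hUmul : ∀ τ ∈ Set.Icc t T, star (U τ t) * U τ t = 1 := by
    have hcont : ContinuousOn (fun σ => star (U σ t) * U σ t) (Set.Icc t T) := fun τ hτ =>
      ((hgder τ ⟨le_trans ht0 hτ.1, hτ.2⟩).continuousWithinAt).mono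
        (Set.Icc_subset_Icc ht0 le_rfl)
    have hconst := constant_of_has_deriv_right_zero hcont (fun τ hτ =>
      (hgder τ ⟨le_trans ht0 hτ.1, le_of_lt hτ.2⟩).mono_of_mem_nhdsWithin
        (Icc_mem_nhdsGE_of_mem ⟨le_trans ht0 hτ.1, hτ.2⟩))
    intro τ hτ
    have h := hconst τ hτ
    rwa [hinit t ht, star_one, one_mul] at h
  have hUnorm : ∀ τ ∈ Set.Icc t T, ‖U τ t‖ = 1 := by
    intro τ hτ
    have h2 : ‖U τ t‖ * ‖U τ t‖ = 1 := by
      rw [← CStarRing.norm_star_mul_self, hUmul τ hτ, CStarRing.norm_one]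
    nlinarith [norm_nonneg (U τ t)]
  -- the frozen evolutions and their derivatives
  have hVP : ∀ (w : ℂ) (τ : ℝ),
      HasDerivAt (fun σ : ℝ => NormedSpace.exp ((w * ((σ : ℂ) - (t : ℂ))) • A))
        (w • (A * NormedSpace.exp ((w * ((τ : ℂ) - (t : ℂ))) • A))) τ := by
    intro w τ
    have h1 : HasDerivAt (fun σ : ℝ => (σ : ℂ)) 1 τ := by
      simpa using (hasDerivAt_id τ).ofReal_comp
    have hc : HasDerivAt (fun σ : ℝ => w * ((σ : ℂ) - (t : ℂ))) w τ := by
      simpa using (h1.sub_const (t : ℂ)).const_mul w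
    have hg := hasDerivAt_exp_smul_const' (𝕂 := ℂ) A (w * ((τ : ℂ) - (t : ℂ)))
    have := HasDerivAt.scomp (x := τ) hg hc
    exact this
  set V : ℝ → Matrix (Fin N) (Fin N) ℂ :=
    fun σ => NormedSpace.exp (((-Complex.I) * ((σ : ℂ) - (t : ℂ))) • A) with hVdef
  set P : ℝ → Matrix (Fin N) (Fin N) ℂ :=
    fun σ => NormedSpace.exp ((Complex.I * ((σ : ℂ) - (t : ℂ))) • A) with hPdef
  have hVder : ∀ τ, HasDerivAt V ((-Complex.I) • (A * V τ)) τ := fun τ => hVP (-Complex.I) τ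
  have hPder : ∀ τ, HasDerivAt P (Complex.I • (A * P τ)) τ := fun τ => hVP Complex.I τ
  have hPV : ∀ τ, V τ * P τ = 1 := by
    intro τ
    have h := hinv (Complex.I * ((τ : ℂ) - (t : ℂ)))
    rw [← neg_mul] at h
    exact h
  have hPnorm : ∀ τ : ℝ, ‖P τ‖ = 1 := by
    intro τ
    apply hnorm1
    rw [_root_.map_mul, _root_.map_sub, Complex.conj_ofReal, Complex.conj_ofReal, Complex.conj_I]
    ring
  have hVnorm : ∀ τ : ℝ, ‖V τ‖ = 1 := by
    intro τ
    apply hnorm1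
    rw [_root_.map_mul, _root_.map_sub, Complex.conj_ofReal, Complex.conj_ofReal, _root_.map_neg,
      Complex.conj_I]
    ring
  -- derivative of the comparison function E
  have hcommAP : ∀ τ : ℝ, A * P τ = P τ * A := fun τ =>
    (((Commute.refl A).smul_right _).exp_right).eq
  set E : ℝ → Matrix (Fin N) (Fin N) ℂ := fun σ => P σ * (U σ t - V σ) with hEdef
  have hEder : ∀ τ ∈ Set.Icc (0 : ℝ) T, HasDerivWithinAt E
      ((-Complex.I) • (P τ * ((H τ - A) * U τ t))) (Set.Icc (0 : ℝ) T) τ := by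
    intro τ hτ
    have hD : HasDerivWithinAt (fun σ => U σ t - V σ)
        ((-Complex.I) • (H τ * U τ t) - (-Complex.I) • (A * V τ)) (Set.Icc (0 : ℝ) T) τ :=
      (hode t ht τ hτ).sub (hVder τ).hasDerivWithinAt
    have hmul := ((hPder τ).hasDerivWithinAt).mul hD
    have heq : Complex.I • (A * P τ) * (U τ t - V τ)
        + P τ * ((-Complex.I) • (H τ * U τ t) - (-Complex.I) • (A * V τ))
        = (-Complex.I) • (P τ * ((H τ - A) * U τ t)) := by
      rw [hcommAP τ]
      simp only [neg_smul, mul_neg, smul_mul_assoc, mul_smul_comm, mul_sub, sub_mul, smul_sub, mul_assoc]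
      module
    exact heq ▸ hmul
  -- apply the norm comparison lemma on [t, t+δ]
  have hB : ∀ x : ℝ, HasDerivAt (fun y : ℝ => L / 2 * (y - t) ^ 2) (L * (x - t)) x := by
    intro x
    have h1 : HasDerivAt (fun y : ℝ => (y - t) ^ 2) (2 * (x - t)) x := by
      simpa using ((hasDerivAt_id x).sub_const t).fun_pow 2
    have h2 := h1.const_mul (L / 2)
    exact h2.congr_deriv (by ring)
  have hsub : Set.Icc t (t + δ) ⊆ Set.Icc (0 : ℝ) T := Set.Icc_subset_Icc ht0 htδ
  have key := image_norm_le_of_norm_deriv_right_le_deriv_boundary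
    (f := E) (f' := fun σ => (-Complex.I) • (P σ * ((H σ - A) * U σ t)))
    (a := t) (b := t + δ)
    (fun x hx => ((hEder x (hsub hx)).continuousWithinAt).mono hsub)
    (fun x hx => (hEder x ⟨le_trans ht0 hx.1, le_trans (le_of_lt hx.2) htδ⟩).mono_of_mem_nhdsWithin
      (Icc_mem_nhdsGE_of_mem ⟨le_trans ht0 hx.1, lt_of_lt_of_le hx.2 htδ⟩))
    ?ha hB ?bound
  case ha =>
    have hEt : E t = 0 := by
      have hVt : V t = 1 := by
        rw [hVdef]
        simp
      show P t * (U t t - V t) = 0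
      rw [hinit t ht, hVt, sub_self, mul_zero]
    rw [hEt, norm_zero, sub_self]
    simp
  case bound =>
    intro x hx
    have hx0T : x ∈ Set.Icc (0 : ℝ) T :=
      ⟨le_trans ht0 hx.1, le_trans (le_of_lt hx.2) htδ⟩
    have h1 : ‖H x - A‖ ≤ L * (x - t) := by
      have h := hLip x hx0T t ht
      rwa [abs_of_nonneg (by linarith [hx.1])] at h
    have h2 : ‖U x t‖ = 1 := hUnorm x ⟨hx.1, le_trans (le_of_lt hx.2) htδ⟩
    calc ‖(-Complex.I) • (P x * ((H x - A) * U x t))‖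
        = ‖P x * ((H x - A) * U x t)‖ := by rw [norm_smul]; simp
      _ ≤ ‖P x‖ * (‖H x - A‖ * ‖U x t‖) :=
          le_trans (norm_mul_le _ _)
            (mul_le_mul_of_nonneg_left (norm_mul_le _ _) (norm_nonneg _))
      _ = ‖H x - A‖ := by rw [hPnorm, h2]; ring
      _ ≤ L * (x - t) := h1
  have hfinal : ‖E (t + δ)‖ ≤ L / 2 * δ ^ 2 := by
    have h := key (x := t + δ) ⟨by linarith, le_rfl⟩
    simpa using h
  -- conclude
  have hexpV : V (t + δ) = NormedSpace.exp ((-Complex.I * (δ : ℂ)) • A) := by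
    rw [hVdef]
    norm_num
  have hEb : U (t + δ) t - NormedSpace.exp ((-Complex.I * (δ : ℂ)) • A)
      = V (t + δ) * E (t + δ) := by
    have h1 : V (t + δ) * E (t + δ) = U (t + δ) t - V (t + δ) := by
      show V (t + δ) * (P (t + δ) * (U (t + δ) t - V (t + δ))) = _
      rw [← mul_assoc, hPV, one_mul]
    rw [h1, hexpV]
  calc ‖U (t + δ) t - NormedSpace.exp ((-Complex.I * (δ : ℂ)) • A)‖
      = ‖V (t + δ) * E (t + δ)‖ := by rw [hEb]
    _ ≤ ‖V (t + δ)‖ * ‖E (t + δ)‖ := norm_mul_le _ _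
    _ = ‖E (t + δ)‖ := by rw [hVnorm, one_mul]
    _ ≤ L / 2 * δ ^ 2 := hfinal
    _ = L * δ ^ 2 / 2 := by ring
end

section
/- Let H : [0, T] → Matrix (Fin N) (Fin N) ℂ be continuous with H(t) Hermitian for all t and Lipschitz with constant L. Let M ≥ 1, δ := T/M, and t_j := jδ. Let U(T, 0) be the evolution operator of H on [0, T]. Then ‖U(T, 0) - exp(-i δ H(t_{M-1})) · exp(-i δ H(t_{M-2})) ⋯ exp(-i δ H(t_0))‖ ≤ T L δ / 2 = L T² / (2M), where ‖·‖ is the operator norm. -/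
open scoped Matrix.Norms.L2Operator
open Matrix

section Aux

variable {N : ℕ}

private lemma aux_norm_one_le : ‖(1 : Matrix (Fin N) (Fin N) ℂ)‖ ≤ 1 := by
  rw [Matrix.cstar_norm_def, _root_.map_one]
  exact ContinuousLinearMap.norm_id_le

/-- `exp (z • A)` with `A` Hermitian and `z` purely imaginary is unitary, hence of norm ≤ 1. -/
private lemma aux_norm_exp_le (A : Matrix (Fin N) (Fin N) ℂ) (hA : A.IsHermitian) (z : ℂ)
    (hz : star z = -z) : ‖NormedSpace.exp (z • A)‖ ≤ 1 := by
  have hstar : star (NormedSpace.exp (z • A)) = NormedSpace.exp ((-z) • A) := by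
    rw [Matrix.star_eq_conjTranspose, ← Matrix.exp_conjTranspose, Matrix.conjTranspose_smul,
      hA.eq, hz]
  have hmul : star (NormedSpace.exp (z • A)) * NormedSpace.exp (z • A) = 1 := by
    rw [hstar, ← Matrix.exp_add_of_commute _ _ (((Commute.refl A).smul_left _).smul_right _)]
    simp [NormedSpace.exp_zero]
  have h2 : ‖NormedSpace.exp (z • A)‖ * ‖NormedSpace.exp (z • A)‖ ≤ 1 := by
    rw [← CStarRing.norm_star_mul_self, hmul]
    exact aux_norm_one_le
  nlinarith [norm_nonneg (NormedSpace.exp (z • A))]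

private lemma aux_norm_le_one_of_star_mul_self (A : Matrix (Fin N) (Fin N) ℂ)
    (h : star A * A = 1) : ‖A‖ ≤ 1 := by
  have h2 : ‖A‖ * ‖A‖ ≤ 1 := by
    rw [← CStarRing.norm_star_mul_self, h]; exact aux_norm_one_le
  nlinarith [norm_nonneg A]

end Aux

/-- **Global error of the first-order time-ordered product formula.** For a Lipschitz,
continuous Hermitian-valued `H` on `[0, T]`, with `δ = T/M` and `t_j = jδ`,
`‖U(T, 0) - exp(-i δ H(t_{M-1})) ⋯ exp(-i δ H(t_0))‖ ≤ T L δ / 2 = L T² / (2M)`. -/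
theorem product_formula_global_error
    (N M : ℕ) (hM : 1 ≤ M) (T L : ℝ) (hT : 0 ≤ T)
    (H : ℝ → Matrix (Fin N) (Fin N) ℂ)
    (hHcont : ContinuousOn H (Set.Icc (0 : ℝ) T))
    (hHherm : ∀ t ∈ Set.Icc (0 : ℝ) T, (H t).IsHermitian)
    (hLip : ∀ s ∈ Set.Icc (0 : ℝ) T, ∀ t ∈ Set.Icc (0 : ℝ) T, ‖H s - H t‖ ≤ L * |s - t|)
    (U : ℝ → ℝ → Matrix (Fin N) (Fin N) ℂ)
    (hinit : ∀ s ∈ Set.Icc (0 : ℝ) T, U s s = 1)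
    (hode : ∀ s ∈ Set.Icc (0 : ℝ) T, ∀ t ∈ Set.Icc (0 : ℝ) T,
      HasDerivWithinAt (fun τ => U τ s) ((-Complex.I) • (H t * U t s))
        (Set.Icc (0 : ℝ) T) t)
    (δ : ℝ) (hδ : δ = T / M) :
    ‖U T 0 -
        (List.ofFn fun j : Fin M =>
          NormedSpace.exp ((-Complex.I * (δ : ℂ)) • H ((j : ℕ) * δ))).reverse.prod‖
      ≤ L * T ^ 2 / (2 * M) := by
  have hMpos : (0 : ℝ) < M := by exact_mod_cast Nat.pos_of_ne_zero (by omega)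
  have h0T : (0 : ℝ) ∈ Set.Icc (0 : ℝ) T := ⟨le_rfl, hT⟩
  have hδ0 : 0 ≤ δ := by rw [hδ]; positivity
  have hMδ : (M : ℝ) * δ = T := by rw [hδ]; field_simp
  -- continuity of U(·,0)
  have hUcont : ContinuousOn (fun τ => U τ 0) (Set.Icc (0 : ℝ) T) := fun τ hτ =>
    (hode 0 h0T τ hτ).continuousWithinAt
  -- Step 1: ‖U τ 0‖ ≤ 1 on [0,T]
  have hU1 : ∀ τ ∈ Set.Icc (0 : ℝ) T, ‖U τ 0‖ ≤ 1 := by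
    intro τ hτ
    set g : ℝ → Matrix (Fin N) (Fin N) ℂ := fun τ => star (U τ 0) * U τ 0 with hg
    have hgderiv : ∀ t ∈ Set.Icc (0 : ℝ) T,
        HasDerivWithinAt g 0 (Set.Icc (0 : ℝ) T) t := by
      intro t ht
      have h1 := hode 0 h0T t ht
      have h2 := h1.star
      have h3 := h2.mul h1
      refine h3.congr_deriv ?_
      have hstar : star ((-Complex.I) • (H t * U t 0))
          = Complex.I • (star (U t 0) * H t) := by
        simp only [star_smul, StarMul.star_mul, star_neg, Complex.star_def, Complex.conj_I,
          neg_neg, Matrix.star_eq_conjTranspose, (hHherm t ht).eq]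
      rw [hstar]
      simp [smul_mul_assoc, mul_assoc, mul_smul_comm]
    have hconst : g τ = g 0 := by
      have := Convex.norm_image_sub_le_of_norm_hasDerivWithin_le
        (f := g) (f' := fun _ => 0) (C := 0) (fun t ht => hgderiv t ht)
        (fun t _ => by simp) (convex_Icc 0 T) h0T hτ
      simpa [sub_eq_zero] using this
    have hg0 : g 0 = 1 := by simp [hg, hinit 0 h0T]
    exact aux_norm_le_one_of_star_mul_self _ (hconst.trans hg0)
  -- Step 2: local error bound
  have hlocal : ∀ a ∈ Set.Icc (0 : ℝ) T, ∀ b ∈ Set.Icc (0 : ℝ) T, a ≤ b →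
      ‖U b 0 - NormedSpace.exp ((-Complex.I * ((b : ℂ) - (a : ℂ))) • H a) * U a 0‖
        ≤ L * (b - a) ^ 2 / 2 := by
    intro a ha b hb hab
    set A := H a with hA
    have hAherm : A.IsHermitian := hHherm a ha
    -- W τ = exp((-i(τ-a)) • A), Wstar τ = exp((i(τ-a)) • A)
    set W : ℝ → Matrix (Fin N) (Fin N) ℂ :=
      fun τ => NormedSpace.exp ((-Complex.I * ((τ : ℂ) - (a : ℂ))) • A) with hW
    set Ws : ℝ → Matrix (Fin N) (Fin N) ℂ :=
      fun τ => NormedSpace.exp ((Complex.I * ((τ : ℂ) - (a : ℂ))) • A) with hWs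
    have hofReal : ∀ τ : ℝ, HasDerivAt (fun τ : ℝ => (τ : ℂ)) 1 τ := fun τ => by
      exact (hasDerivAt_id τ).ofReal_comp
    have hWsderiv : ∀ τ : ℝ,
        HasDerivAt Ws (Complex.I • (Ws τ * A)) τ := by
      intro τ
      have hh : HasDerivAt (fun τ : ℝ => Complex.I * ((τ : ℂ) - (a : ℂ))) Complex.I τ := by
        simpa using (((hofReal τ).sub_const (a : ℂ)).const_mul Complex.I)
      have hexp := hasDerivAt_exp_smul_const (𝕂 := ℂ) A (Complex.I * ((τ : ℂ) - (a : ℂ)))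
      exact hexp.scomp τ hh
    have hWsWmul : ∀ τ : ℝ, W τ * Ws τ = 1 := by
      intro τ
      rw [hW, hWs, ← Matrix.exp_add_of_commute _ _
        (((Commute.refl A).smul_left _).smul_right _)]
      have : (-Complex.I * ((τ : ℂ) - (a : ℂ))) • A
          + (Complex.I * ((τ : ℂ) - (a : ℂ))) • A = 0 := by
        rw [← add_smul]; ring_nf; simp
      rw [this, NormedSpace.exp_zero]
    have hWnorm : ∀ τ ∈ Set.Icc a b, ‖W τ‖ ≤ 1 := by
      intro τ _
      refine aux_norm_exp_le A hAherm _ ?_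
      simp [Complex.conj_ofReal]
    have hWsnorm : ∀ τ ∈ Set.Icc a b, ‖Ws τ‖ ≤ 1 := by
      intro τ _
      refine aux_norm_exp_le A hAherm _ ?_
      simp [Complex.conj_ofReal]
    have hsub : Set.Icc a b ⊆ Set.Icc 0 T := Set.Icc_subset_Icc ha.1 hb.2
    -- D τ = Ws τ * U τ 0
    set D : ℝ → Matrix (Fin N) (Fin N) ℂ := fun τ => Ws τ * U τ 0 with hD
    set f : ℝ → Matrix (Fin N) (Fin N) ℂ := fun τ => D τ - D a with hf
    set f' : ℝ → Matrix (Fin N) (Fin N) ℂ :=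
      fun τ => Ws τ * ((-Complex.I) • ((H τ - A) * U τ 0)) with hf'
    have hfderiv : ∀ τ ∈ Set.Ico a b, HasDerivWithinAt f (f' τ) (Set.Ici τ) τ := by
      intro τ hτ
      have hτT : τ ∈ Set.Icc (0 : ℝ) T := hsub ⟨hτ.1, hτ.2.le⟩
      have hU := hode 0 h0T τ hτT
      have hDd : HasDerivWithinAt D
          (Complex.I • (Ws τ * A) * U τ 0 + Ws τ * ((-Complex.I) • (H τ * U τ 0)))
          (Set.Icc (0 : ℝ) T) τ :=
        ((hWsderiv τ).hasDerivWithinAt).mul hU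
      have hDd' : HasDerivWithinAt D (f' τ) (Set.Icc (0 : ℝ) T) τ := by
        convert hDd using 1
        show Ws τ * ((-Complex.I) • ((H τ - A) * U τ 0))
          = Complex.I • (Ws τ * A) * U τ 0 + Ws τ * ((-Complex.I) • (H τ * U τ 0))
        simp only [Matrix.sub_mul, smul_sub, Matrix.mul_sub, smul_mul_assoc, mul_smul_comm,
          mul_assoc]
        module
      have hio : Set.Ico τ b ⊆ Set.Icc (0 : ℝ) T := fun x hx =>
        hsub ⟨le_trans hτ.1 hx.1, hx.2.le⟩
      have h1 : HasDerivWithinAt D (f' τ) (Set.Ici τ ∩ Set.Iio b) τ := by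
        rw [Set.Ici_inter_Iio]
        exact hDd'.mono hio
      have h2 : HasDerivWithinAt D (f' τ) (Set.Ici τ) τ :=
        (hasDerivWithinAt_inter (Iio_mem_nhds hτ.2)).mp h1
      exact h2.sub_const (D a)
    have hfcont : ContinuousOn f (Set.Icc a b) := by
      apply ContinuousOn.sub _ continuousOn_const
      exact ContinuousOn.mul
        (Continuous.continuousOn (by
          exact continuous_iff_continuousAt.2 fun τ => (hWsderiv τ).continuousAt))
        (hUcont.mono hsub)
    have hbound : ∀ τ ∈ Set.Ico a b, ‖f' τ‖ ≤ L * (τ - a) := by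
      intro τ hτ
      have hτT : τ ∈ Set.Icc (0 : ℝ) T := hsub ⟨hτ.1, hτ.2.le⟩
      calc ‖f' τ‖ ≤ ‖Ws τ‖ * ‖(-Complex.I) • ((H τ - A) * U τ 0)‖ := norm_mul_le _ _
        _ ≤ 1 * ‖(-Complex.I) • ((H τ - A) * U τ 0)‖ := by
            apply mul_le_mul_of_nonneg_right (hWsnorm τ ⟨hτ.1, hτ.2.le⟩) (norm_nonneg _)
        _ = ‖(H τ - A) * U τ 0‖ := by rw [one_mul, norm_smul]; simp
        _ ≤ ‖H τ - A‖ * ‖U τ 0‖ := norm_mul_le _ _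
        _ ≤ (L * (τ - a)) * 1 := by
            have h1 : ‖H τ - A‖ ≤ L * (τ - a) := by
              have h2 := hLip τ hτT a ha
              rw [abs_of_nonneg (sub_nonneg.mpr hτ.1)] at h2
              exact h2
            exact mul_le_mul h1 (hU1 τ hτT) (norm_nonneg _)
              (le_trans (norm_nonneg _) h1)
        _ = L * (τ - a) := by ring
    have hB : ∀ τ : ℝ, HasDerivAt (fun τ => L * (τ - a) ^ 2 / 2) (L * (τ - a)) τ := by
      intro τ
      have h1 := (((hasDerivAt_id τ).sub_const a).pow 2).const_mul (L / 2)
      simp only [id_eq] at h1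
      have heq : (fun y : ℝ => L / 2 * (y - a) ^ 2) = fun y : ℝ => L * (y - a) ^ 2 / 2 := by
        funext y; ring
      simp only [Pi.pow_apply] at h1; rw [heq] at h1
      refine h1.congr_deriv ?_
      rw [show (2:ℕ) - 1 = 1 from rfl]; push_cast; ring
    have hkey := image_norm_le_of_norm_deriv_right_le_deriv_boundary hfcont hfderiv
      (by simp [hf]) hB hbound (Set.right_mem_Icc.2 hab)
    -- turn the D-estimate into the U-estimate
    have hWsa : Ws a = 1 := by
      show NormedSpace.exp ((Complex.I * ((a : ℂ) - (a : ℂ))) • A) = 1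
      rw [sub_self, mul_zero, zero_smul, NormedSpace.exp_zero]
    have hrewrite : U b 0 - NormedSpace.exp ((-Complex.I * ((b : ℂ) - (a : ℂ))) • H a) * U a 0
        = W b * f b := by
      show _ = W b * (Ws b * U b 0 - Ws a * U a 0)
      rw [Matrix.mul_sub, ← mul_assoc, ← mul_assoc, hWsWmul b, one_mul, hWsa, mul_one]
    rw [hrewrite]
    calc ‖W b * f b‖ ≤ ‖W b‖ * ‖f b‖ := norm_mul_le _ _
      _ ≤ 1 * (L * (b - a) ^ 2 / 2) := by
          apply mul_le_mul (hWnorm b (Set.right_mem_Icc.2 hab)) hkey (norm_nonneg _) zero_le_one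
      _ = L * (b - a) ^ 2 / 2 := one_mul _
  -- Step 3: global induction
  set E : ℕ → Matrix (Fin N) (Fin N) ℂ :=
    fun j => NormedSpace.exp ((-Complex.I * (δ : ℂ)) • H (j * δ)) with hE
  have hEnorm : ∀ j : ℕ, j < M → ‖E j‖ ≤ 1 := by
    intro j hj
    refine aux_norm_exp_le _ (hHherm (j * δ) ⟨by positivity, ?_⟩) _ ?_
    · calc (j : ℝ) * δ ≤ M * δ := by
            apply mul_le_mul_of_nonneg_right _ hδ0; exact_mod_cast hj.le
        _ = T := hMδ
    · simp [Complex.conj_ofReal]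
  have hmem : ∀ k : ℕ, k ≤ M → (k : ℝ) * δ ∈ Set.Icc (0 : ℝ) T := by
    intro k hk
    constructor
    · positivity
    · calc (k : ℝ) * δ ≤ M * δ := by
            apply mul_le_mul_of_nonneg_right _ hδ0; exact_mod_cast hk
        _ = T := hMδ
  have hglobal : ∀ k : ℕ, k ≤ M →
      ‖U ((k : ℝ) * δ) 0 - (List.ofFn fun j : Fin k => E j).reverse.prod‖
        ≤ k * (L * δ ^ 2 / 2) := by
    intro k
    induction k with
    | zero => intro _; simp [hinit 0 h0T]
    | succ k ih =>
      intro hk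
      have hk' : k ≤ M := by omega
      have hkM : k < M := by omega
      have hprod : (List.ofFn fun j : Fin (k + 1) => E j).reverse.prod
          = E k * (List.ofFn fun j : Fin k => E j).reverse.prod := by
        rw [List.ofFn_succ']
        simp [List.concat_eq_append]
      have hak : ((k : ℝ)) * δ ∈ Set.Icc (0 : ℝ) T := hmem k hk'
      have hbk : ((k + 1 : ℕ) : ℝ) * δ ∈ Set.Icc (0 : ℝ) T := hmem (k + 1) hk
      have hab : (k : ℝ) * δ ≤ ((k + 1 : ℕ) : ℝ) * δ := by
        apply mul_le_mul_of_nonneg_right _ hδ0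
        exact_mod_cast Nat.le_succ k
      have hloc := hlocal _ hak _ hbk hab
      have hdiff : (((((k + 1 : ℕ) : ℝ) * δ : ℝ)) : ℂ) - (((k : ℝ) * δ : ℝ) : ℂ) = (δ : ℂ) := by
        push_cast; ring
      rw [hdiff] at hloc
      have hba : ((k + 1 : ℕ) : ℝ) * δ - (k : ℝ) * δ = δ := by push_cast; ring
      rw [hba] at hloc
      rw [hprod]
      calc ‖U (((k + 1 : ℕ) : ℝ) * δ) 0 - E k * (List.ofFn fun j : Fin k => E j).reverse.prod‖
          ≤ ‖U (((k + 1 : ℕ) : ℝ) * δ) 0 - E k * U ((k : ℝ) * δ) 0‖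
            + ‖E k * (U ((k : ℝ) * δ) 0 - (List.ofFn fun j : Fin k => E j).reverse.prod)‖ := by
            rw [Matrix.mul_sub]
            exact norm_sub_le_norm_sub_add_norm_sub _ _ _
        _ ≤ L * δ ^ 2 / 2 + 1 * (k * (L * δ ^ 2 / 2)) := by
            apply add_le_add hloc
            calc ‖E k * (U ((k : ℝ) * δ) 0 - (List.ofFn fun j : Fin k => E j).reverse.prod)‖
                ≤ ‖E k‖ * ‖U ((k : ℝ) * δ) 0 - (List.ofFn fun j : Fin k => E j).reverse.prod‖ :=
                  norm_mul_le _ _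
              _ ≤ 1 * (k * (L * δ ^ 2 / 2)) := by
                  apply mul_le_mul (hEnorm k hkM) (ih hk') (norm_nonneg _) zero_le_one
        _ = (k + 1 : ℕ) * (L * δ ^ 2 / 2) := by push_cast; ring
  have hfinal := hglobal M le_rfl
  rw [hMδ] at hfinal
  calc ‖U T 0 - (List.ofFn fun j : Fin M =>
        NormedSpace.exp ((-Complex.I * (δ : ℂ)) • H ((j : ℕ) * δ))).reverse.prod‖
      ≤ M * (L * δ ^ 2 / 2) := hfinal
    _ = L * T ^ 2 / (2 * M) := by
        rw [hδ]; field_simp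
end

section
/- Let H₁, H₂ : [0, T] → Matrix (Fin N) (Fin N) ℂ be continuous with H₁(t), H₂(t) Hermitian for all t, and let U₁(t), U₂(t) be their respective evolution operators with U₁(0) = U₂(0) = 1. Then ‖U₁(T) - U₂(T)‖ ≤ ∫₀ᵀ ‖H₁(s) - H₂(s)‖ ds, where ‖·‖ is the operator norm. In particular, if ‖H₁(t) - H₂(t)‖ ≤ ε for all t ∈ [0, T], then ‖U₁(T) - U₂(T)‖ ≤ ε T. -/
open scoped Matrix.Norms.L2Operator
open Matrix

/-- **Stability (perturbation) bound for time-dependent evolutions.** If `U₁, U₂` are the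
evolution operators of continuous Hermitian-valued `H₁, H₂` on `[0, T]`, then
`‖U₁(T) - U₂(T)‖ ≤ ∫₀ᵀ ‖H₁(s) - H₂(s)‖ ds`; in particular, if `‖H₁(t) - H₂(t)‖ ≤ ε` on
`[0, T]`, then `‖U₁(T) - U₂(T)‖ ≤ ε T`. -/
theorem evolution_stability_bound
    (N : ℕ) (T : ℝ) (hT : 0 ≤ T)
    (H₁ H₂ : ℝ → Matrix (Fin N) (Fin N) ℂ)
    (hH₁cont : ContinuousOn H₁ (Set.Icc (0 : ℝ) T))
    (hH₂cont : ContinuousOn H₂ (Set.Icc (0 : ℝ) T))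
    (hH₁herm : ∀ t ∈ Set.Icc (0 : ℝ) T, (H₁ t).IsHermitian)
    (hH₂herm : ∀ t ∈ Set.Icc (0 : ℝ) T, (H₂ t).IsHermitian)
    (U₁ U₂ : ℝ → Matrix (Fin N) (Fin N) ℂ)
    (hU₁0 : U₁ 0 = 1) (hU₂0 : U₂ 0 = 1)
    (hU₁ode : ∀ t ∈ Set.Icc (0 : ℝ) T,
      HasDerivWithinAt U₁ ((-Complex.I) • (H₁ t * U₁ t)) (Set.Icc (0 : ℝ) T) t)
    (hU₂ode : ∀ t ∈ Set.Icc (0 : ℝ) T,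
      HasDerivWithinAt U₂ ((-Complex.I) • (H₂ t * U₂ t)) (Set.Icc (0 : ℝ) T) t) :
    ‖U₁ T - U₂ T‖ ≤ (∫ s in (0 : ℝ)..T, ‖H₁ s - H₂ s‖) ∧
    ∀ ε : ℝ, (∀ t ∈ Set.Icc (0 : ℝ) T, ‖H₁ t - H₂ t‖ ≤ ε) → ‖U₁ T - U₂ T‖ ≤ ε * T := by
  have h0s : (0:ℝ) ∈ Set.Icc (0:ℝ) T := Set.left_mem_Icc.2 hT
  have hTs : T ∈ Set.Icc (0:ℝ) T := Set.right_mem_Icc.2 hT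
  have hU₁cont : ContinuousOn U₁ (Set.Icc (0:ℝ) T) :=
    fun t ht => (hU₁ode t ht).continuousWithinAt
  have hU₂cont : ContinuousOn U₂ (Set.Icc (0:ℝ) T) :=
    fun t ht => (hU₂ode t ht).continuousWithinAt
  -- Unitarity of both evolutions
  have unit : ∀ (H U : ℝ → Matrix (Fin N) (Fin N) ℂ),
      (∀ t ∈ Set.Icc (0:ℝ) T, (H t).IsHermitian) → U 0 = 1 →
      (∀ t ∈ Set.Icc (0:ℝ) T,
        HasDerivWithinAt U ((-Complex.I) • (H t * U t)) (Set.Icc (0:ℝ) T) t) →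
      ∀ t ∈ Set.Icc (0:ℝ) T, star (U t) * U t = 1 := by
    intro H U hherm hU0 hode t ht
    have hUc : ContinuousOn U (Set.Icc (0:ℝ) T) :=
      fun x hx => (hode x hx).continuousWithinAt
    have key : ∀ x ∈ Set.Icc (0:ℝ) T,
        (fun t => star (U t) * U t) x = (fun t => star (U t) * U t) 0 := by
      apply constant_of_has_deriv_right_zero
      · exact (continuous_star.comp_continuousOn hUc).mul hUc
      · intro x hx
        have hxs : x ∈ Set.Icc (0:ℝ) T := Set.mem_Icc.2 ⟨hx.1, hx.2.le⟩
        have hd := ((hode x hxs).star.mul (hode x hxs)).mono_of_mem_nhdsWithin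
          (Icc_mem_nhdsGE_of_mem hx)
        have hval : star ((-Complex.I) • (H x * U x)) * U x +
            star (U x) * ((-Complex.I) • (H x * U x)) = 0 := by
          have hH : star (H x) = H x := (hherm x hxs).eq
          simp only [star_smul, star_neg, Complex.star_def, Complex.conj_I,
            neg_neg, smul_mul_assoc, mul_smul_comm, neg_smul]
          rw [Matrix.star_mul, hH]
          simp [mul_assoc, mul_smul_comm]
        rwa [hval] at hd
    have := key t ht
    simp only [hU0, star_one, mul_one] at this
    exact this
  have h₁u : ∀ t ∈ Set.Icc (0:ℝ) T, star (U₁ t) * U₁ t = 1 := unit H₁ U₁ hH₁herm hU₁0 hU₁ode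
  have h₂u : ∀ t ∈ Set.Icc (0:ℝ) T, star (U₂ t) * U₂ t = 1 := unit H₂ U₂ hH₂herm hU₂0 hU₂ode
  -- norm bounds
  have hnorm : ∀ A : Matrix (Fin N) (Fin N) ℂ, star A * A = 1 → ‖A‖ ≤ 1 := by
    intro A h
    have h2 : ‖A‖ * ‖A‖ = ‖(1 : Matrix (Fin N) (Fin N) ℂ)‖ := by
      rw [← Matrix.l2_opNorm_conjTranspose_mul_self, ← Matrix.star_eq_conjTranspose, h]
    have h1 : ‖(1 : Matrix (Fin N) (Fin N) ℂ)‖ ≤ 1 := by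
      rw [Matrix.cstar_norm_def, _root_.map_one]
      exact ContinuousLinearMap.norm_id_le
    nlinarith [norm_nonneg A]
  -- The comparison function
  set W : ℝ → Matrix (Fin N) (Fin N) ℂ := fun t => star (U₁ t) * U₂ t with hW
  set g : ℝ → Matrix (Fin N) (Fin N) ℂ :=
    fun t => Complex.I • (star (U₁ t) * ((H₁ t - H₂ t) * U₂ t)) with hg
  have hWder : ∀ t ∈ Set.Icc (0:ℝ) T, HasDerivWithinAt W (g t) (Set.Icc (0:ℝ) T) t := by
    intro t ht
    have hd := (hU₁ode t ht).star.mul (hU₂ode t ht)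
    have hval : star ((-Complex.I) • (H₁ t * U₁ t)) * U₂ t +
        star (U₁ t) * ((-Complex.I) • (H₂ t * U₂ t)) = g t := by
      have hH : star (H₁ t) = H₁ t := (hH₁herm t ht).eq
      simp only [hg, star_smul, star_neg, Complex.star_def, Complex.conj_I,
        neg_neg, smul_mul_assoc, mul_smul_comm, neg_smul, sub_mul, mul_sub, smul_sub]
      rw [Matrix.star_mul, hH]
      simp [mul_assoc, mul_smul_comm, sub_eq_add_neg]
    rwa [hval] at hd
  have hWcont : ContinuousOn W (Set.Icc (0:ℝ) T) :=
    fun t ht => (hWder t ht).continuousWithinAt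
  have hgcont : ContinuousOn g (Set.Icc (0:ℝ) T) := by
    exact ContinuousOn.const_smul ((continuous_star.comp_continuousOn hU₁cont).mul
      (((hH₁cont.sub hH₂cont)).mul hU₂cont)) Complex.I
  have hgint : IntervalIntegrable g MeasureTheory.volume 0 T := by
    apply ContinuousOn.intervalIntegrable
    rwa [Set.uIcc_of_le hT]
  have hFTC : ∫ t in (0:ℝ)..T, g t = W T - W 0 := by
    apply intervalIntegral.integral_eq_sub_of_hasDeriv_right_of_le hT hWcont _ hgint
    intro x hx
    exact (hWder x (Set.mem_Icc.2 ⟨hx.1.le, hx.2.le⟩)).mono_of_mem_nhdsWithin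
      (Icc_mem_nhdsGT_of_mem ⟨hx.1.le, hx.2⟩)
  -- pointwise norm bound on g
  have hgle : ∀ t ∈ Set.Icc (0:ℝ) T, ‖g t‖ ≤ ‖H₁ t - H₂ t‖ := by
    intro t ht
    have h1 : ‖star (U₁ t)‖ ≤ 1 := by
      rw [Matrix.star_eq_conjTranspose, Matrix.l2_opNorm_conjTranspose]
      exact hnorm _ (h₁u t ht)
    have h2 : ‖U₂ t‖ ≤ 1 := hnorm _ (h₂u t ht)
    calc ‖g t‖ = ‖star (U₁ t) * ((H₁ t - H₂ t) * U₂ t)‖ := by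
          rw [hg]; rw [norm_smul, Complex.norm_I, one_mul]
      _ ≤ ‖star (U₁ t)‖ * ‖(H₁ t - H₂ t) * U₂ t‖ := Matrix.l2_opNorm_mul _ _
      _ ≤ ‖star (U₁ t)‖ * (‖H₁ t - H₂ t‖ * ‖U₂ t‖) := by
          gcongr; exact Matrix.l2_opNorm_mul _ _
      _ ≤ 1 * (‖H₁ t - H₂ t‖ * 1) := by gcongr
      _ = ‖H₁ t - H₂ t‖ := by ring
  have hHnint : IntervalIntegrable (fun t => ‖H₁ t - H₂ t‖) MeasureTheory.volume 0 T := by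
    apply ContinuousOn.intervalIntegrable
    rw [Set.uIcc_of_le hT]
    exact (hH₁cont.sub hH₂cont).norm
  -- main estimate
  have hmain : ‖U₁ T - U₂ T‖ ≤ ∫ s in (0:ℝ)..T, ‖H₁ s - H₂ s‖ := by
    have hWT : ‖W T - W 0‖ ≤ ∫ s in (0:ℝ)..T, ‖H₁ s - H₂ s‖ := by
      rw [← hFTC]
      calc ‖∫ t in (0:ℝ)..T, g t‖ ≤ ∫ t in (0:ℝ)..T, ‖g t‖ :=
            intervalIntegral.norm_integral_le_integral_norm hT
        _ ≤ ∫ s in (0:ℝ)..T, ‖H₁ s - H₂ s‖ := by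
            apply intervalIntegral.integral_mono_on hT hgint.norm hHnint
            exact hgle
    have hU₁U : U₁ T * star (U₁ T) = 1 := mul_eq_one_comm.2 (h₁u T hTs)
    have hrw : U₁ T - U₂ T = U₁ T * (W 0 - W T) := by
      rw [hW]
      simp only [hU₁0, hU₂0, star_one, one_mul, mul_sub, mul_one, ← mul_assoc, hU₁U]
    calc ‖U₁ T - U₂ T‖ = ‖U₁ T * (W 0 - W T)‖ := by rw [hrw]
      _ ≤ ‖U₁ T‖ * ‖W 0 - W T‖ := Matrix.l2_opNorm_mul _ _
      _ ≤ 1 * ‖W T - W 0‖ := by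
          rw [norm_sub_rev (W 0)]
          gcongr
          exact hnorm _ (h₁u T hTs)
      _ ≤ ∫ s in (0:ℝ)..T, ‖H₁ s - H₂ s‖ := by rw [one_mul]; exact hWT
  refine ⟨hmain, fun ε hε => ?_⟩
  have : (∫ s in (0:ℝ)..T, ‖H₁ s - H₂ s‖) ≤ ε * T := by
    calc (∫ s in (0:ℝ)..T, ‖H₁ s - H₂ s‖) ≤ ∫ _ in (0:ℝ)..T, ε := by
          apply intervalIntegral.integral_mono_on hT hHnint intervalIntegrable_const
          exact hε
      _ = ε * T := by simp [mul_comm]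
  exact hmain.trans this
end

section
/- (Truncated Dyson series error.) Let H : [0, T] → Matrix (Fin N) (Fin N) ℂ be continuous with H(t) Hermitian for all t, let U(T) be its evolution operator, and let h := ∫₀ᵀ ‖H(s)‖ ds. Define the Dyson terms D_0 := 1 and, for k ≥ 1, D_k := (-i)^k ∫₀ᵀ ∫₀^{s_k} ⋯ ∫₀^{s_2} H(s_k) H(s_{k-1}) ⋯ H(s_1) ds_1 ⋯ ds_k (integration over the ordered simplex 0 ≤ s_1 ≤ ⋯ ≤ s_k ≤ T). Then for every K ≥ 0, ‖U(T) - ∑_{k=0}^{K} D_k‖ ≤ h^{K+1} / (K+1)!, where ‖·‖ is the operator norm. -/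
open scoped Matrix.Norms.L2Operator
open Matrix

/-- **Truncated Dyson series error.** For a continuous Hermitian-valued `H` on `[0, T]` with
evolution operator `U` and `h = ∫₀ᵀ ‖H(s)‖ ds`, the Dyson terms `D_k = (-i)^k • E k T`,
where `E 0 t = 1` and `E (k+1) t = ∫₀ᵗ H(s) E k s ds` encodes the `k`-fold time-ordered
integral over the simplex `0 ≤ s₁ ≤ ⋯ ≤ s_k ≤ t`, satisfy
`‖U(T) - ∑_{k ≤ K} D_k‖ ≤ h^{K+1} / (K+1)!` for every `K`. -/
theorem truncated_dyson_series_error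
    (N : ℕ) (T : ℝ) (hT : 0 ≤ T)
    (H : ℝ → Matrix (Fin N) (Fin N) ℂ)
    (hHcont : ContinuousOn H (Set.Icc (0 : ℝ) T))
    (hHherm : ∀ t ∈ Set.Icc (0 : ℝ) T, (H t).IsHermitian)
    (U : ℝ → Matrix (Fin N) (Fin N) ℂ) (hU0 : U 0 = 1)
    (hode : ∀ t ∈ Set.Icc (0 : ℝ) T,
      HasDerivWithinAt U ((-Complex.I) • (H t * U t)) (Set.Icc (0 : ℝ) T) t)
    (h : ℝ) (hh : h = ∫ s in (0 : ℝ)..T, ‖H s‖)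
    (E : ℕ → ℝ → Matrix (Fin N) (Fin N) ℂ)
    (hE0 : ∀ t, E 0 t = 1)
    (hEsucc : ∀ k : ℕ, ∀ t ∈ Set.Icc (0 : ℝ) T,
      E (k + 1) t = ∫ s in (0 : ℝ)..t, H s * E k s) :
    ∀ K : ℕ,
      ‖U T - ∑ k ∈ Finset.range (K + 1), ((-Complex.I) ^ k) • E k T‖
        ≤ h ^ (K + 1) / (Nat.factorial (K + 1) : ℝ) := by
  intro K
  have hTmem : T ∈ Set.Icc (0 : ℝ) T := ⟨hT, le_rfl⟩
  -- continuity of U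
  have hUcont : ContinuousOn U (Set.Icc (0 : ℝ) T) :=
    fun t ht => (hode t ht).continuousWithinAt
  -- ‖1‖ ≤ 1
  have hnorm1 : ‖(1 : Matrix (Fin N) (Fin N) ℂ)‖ ≤ 1 := by
    rw [Matrix.cstar_norm_def, _root_.map_one]
    exact ContinuousLinearMap.norm_id_le
  -- U is unitary; we only need ‖U t‖ ≤ 1
  have hUnorm : ∀ t ∈ Set.Icc (0 : ℝ) T, ‖U t‖ ≤ 1 := by
    have hVd : ∀ t ∈ Set.Icc (0 : ℝ) T,
        HasDerivWithinAt (fun t => star (U t) * U t) 0 (Set.Icc (0 : ℝ) T) t := by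
      intro t ht
      have h1 := ((hode t ht).star).fun_mul (hode t ht)
      refine h1.congr_deriv ?_
      have hA : star (H t) = H t := by
        rw [Matrix.star_eq_conjTranspose]; exact (hHherm t ht)
      simp [star_smul, StarMul.star_mul, hA, smul_mul_assoc, mul_smul_comm, mul_assoc]
    have hconst : ∀ t ∈ Set.Icc (0 : ℝ) T, star (U t) * U t = 1 := by
      intro t ht
      have h0 : (0 : ℝ) ∈ Set.Icc (0 : ℝ) T := ⟨le_rfl, hT⟩
      have hle := (convex_Icc (0 : ℝ) T).norm_image_sub_le_of_norm_hasDerivWithin_le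
        (f' := fun _ => 0) (C := 0) (fun x hx => hVd x hx) (fun x _ => norm_zero.le) h0 ht
      rw [zero_mul] at hle
      have : star (U t) * U t - star (U 0) * U 0 = 0 :=
        norm_le_zero_iff.mp hle
      have h2 : star (U t) * U t = star (U 0) * U 0 := by
        linear_combination (norm := abel) this
      rw [h2, hU0]; simp
    intro t ht
    have h2 : ‖U t‖ * ‖U t‖ ≤ 1 := by
      rw [← CStarRing.norm_star_mul_self, hconst t ht]; exact hnorm1
    nlinarith [norm_nonneg (U t)]
  -- continuity of E k
  have hEcont : ∀ k, ContinuousOn (E k) (Set.Icc (0 : ℝ) T) := by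
    intro k
    induction k with
    | zero => exact continuousOn_const.congr (fun t _ => hE0 t)
    | succ k ih =>
      have hint : MeasureTheory.IntegrableOn (fun s => H s * E k s) (Set.uIcc (0 : ℝ) T) := by
        rw [Set.uIcc_of_le hT]
        exact (hHcont.mul ih).integrableOn_Icc
      have := intervalIntegral.continuousOn_primitive_interval hint
      rw [Set.uIcc_of_le hT] at this
      exact this.congr (fun t ht => hEsucc k t ht)
  -- interval integrability helper
  have hII : ∀ (f : ℝ → Matrix (Fin N) (Fin N) ℂ), ContinuousOn f (Set.Icc (0 : ℝ) T) →
      ∀ t ∈ Set.Icc (0 : ℝ) T, IntervalIntegrable f MeasureTheory.volume 0 t := by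
    intro f hf t ht
    apply ContinuousOn.intervalIntegrable
    rw [Set.uIcc_of_le ht.1]
    exact hf.mono (Set.Icc_subset_Icc le_rfl ht.2)
  -- FTC for U
  have hftcU : ∀ t ∈ Set.Icc (0 : ℝ) T,
      U t - 1 = ∫ s in (0 : ℝ)..t, (-Complex.I) • (H s * U s) := by
    intro t ht
    have := intervalIntegral.integral_eq_sub_of_hasDeriv_right_of_le ht.1
      (f := U) (f' := fun s => (-Complex.I) • (H s * U s))
      (hUcont.mono (Set.Icc_subset_Icc le_rfl ht.2))
      (fun x hx => by
        have hxm : x ∈ Set.Icc (0 : ℝ) T := ⟨hx.1.le, hx.2.le.trans ht.2⟩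
        refine (hode x hxm).mono_of_mem_nhdsWithin ?_
        refine Filter.mem_of_superset (Ioc_mem_nhdsGT_of_mem ⟨le_rfl, lt_of_lt_of_le hx.2 ht.2⟩) ?_
        exact fun y hy => ⟨hx.1.le.trans hy.1.le, hy.2⟩)
      (hII _ ((hHcont.mul hUcont).const_smul (-Complex.I)) t ht)
    rw [this, hU0]
  -- generic interval integrability helper
  have hIIr : ∀ (f : ℝ → ℝ), ContinuousOn f (Set.Icc (0 : ℝ) T) →
      ∀ t ∈ Set.Icc (0 : ℝ) T, IntervalIntegrable f MeasureTheory.volume 0 t := by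
    intro f hf t ht
    apply ContinuousOn.intervalIntegrable
    rw [Set.uIcc_of_le ht.1]
    exact hf.mono (Set.Icc_subset_Icc le_rfl ht.2)
  -- the primitive of ‖H‖
  set g : ℝ → ℝ := fun t => ∫ s in (0:ℝ)..t, ‖H s‖ with hgdef
  have hHn : ContinuousOn (fun s => ‖H s‖) (Set.Icc (0:ℝ) T) := hHcont.norm
  have hgcont : ContinuousOn g (Set.Icc (0:ℝ) T) := by
    have h1 : MeasureTheory.IntegrableOn (fun s => ‖H s‖) (Set.uIcc (0:ℝ) T) := by
      rw [Set.uIcc_of_le hT]; exact hHn.integrableOn_Icc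
    have := intervalIntegral.continuousOn_primitive_interval h1
    rwa [Set.uIcc_of_le hT] at this
  have hg0 : g 0 = 0 := intervalIntegral.integral_same
  -- right derivative of g at interior points
  have hgd : ∀ x ∈ Set.Ioo (0:ℝ) T, HasDerivWithinAt g ‖H x‖ (Set.Ioi x) x := by
    intro x hx
    have hxm : x ∈ Set.Icc (0:ℝ) T := ⟨hx.1.le, hx.2.le⟩
    have hmemI : Set.Icc (0:ℝ) T ∈ nhdsWithin x (Set.Ioi x) := by
      refine Filter.mem_of_superset (Ioc_mem_nhdsGT_of_mem ⟨le_rfl, hx.2⟩) ?_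
      exact fun y hy => ⟨hx.1.le.trans hy.1.le, hy.2⟩
    have hmeas : StronglyMeasurableAtFilter (fun s => ‖H s‖)
        (nhdsWithin x (Set.Ioi x)) MeasureTheory.volume :=
      ⟨Set.Icc (0:ℝ) T, hmemI, (hHn.aestronglyMeasurable measurableSet_Icc)⟩
    have hcw : ContinuousWithinAt (fun s => ‖H s‖) (Set.Ioi x) x :=
      (hHn x hxm).mono_of_mem_nhdsWithin hmemI
    exact (intervalIntegral.integral_hasDerivWithinAt_right
      (hIIr _ hHn x hxm) hmeas hcw).mono Set.Ioi_subset_Ici_self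
  -- key integral identity
  have hkey : ∀ k : ℕ, ∀ t ∈ Set.Icc (0:ℝ) T,
      ∫ s in (0:ℝ)..t, ((k:ℝ)+1) * ‖H s‖ * g s ^ k = g t ^ (k+1) := by
    intro k t ht
    have hcont : ContinuousOn (fun s => g s ^ (k+1)) (Set.Icc (0:ℝ) t) :=
      (hgcont.mono (Set.Icc_subset_Icc le_rfl ht.2)).pow _
    have hderiv : ∀ x ∈ Set.Ioo (0:ℝ) t,
        HasDerivWithinAt (fun s => g s ^ (k+1)) (((k:ℝ)+1) * ‖H x‖ * g x ^ k) (Set.Ioi x) x := by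
      intro x hx
      have := (hgd x ⟨hx.1, lt_of_lt_of_le hx.2 ht.2⟩).fun_pow (k+1)
      refine this.congr_deriv ?_
      push_cast
      ring_nf
    have hint : IntervalIntegrable (fun s => ((k:ℝ)+1) * ‖H s‖ * g s ^ k)
        MeasureTheory.volume 0 t :=
      hIIr _ ((continuousOn_const.mul hHn).mul (hgcont.pow k)) t ht
    have := intervalIntegral.integral_eq_sub_of_hasDeriv_right_of_le ht.1 hcont hderiv hint
    rw [this, hg0]
    simp
  -- recursion identity for the remainders
  have hWrec : ∀ k : ℕ, ∀ t ∈ Set.Icc (0:ℝ) T,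
      U t - ∑ j ∈ Finset.range (k+1), ((-Complex.I)^j) • E j t
        = (-Complex.I) • ∫ s in (0:ℝ)..t,
            H s * (U s - ∑ j ∈ Finset.range k, ((-Complex.I)^j) • E j s) := by
    intro k t ht
    have hint1 : IntervalIntegrable (fun s => H s * U s) MeasureTheory.volume 0 t :=
      hII _ (hHcont.mul hUcont) t ht
    have hintj : ∀ j ∈ Finset.range k, IntervalIntegrable
        (fun s => ((-Complex.I)^j) • (H s * E j s)) MeasureTheory.volume 0 t :=
      fun j _ => hII _ ((hHcont.mul (hEcont j)).const_smul ((-Complex.I)^j)) t ht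
    have heq : (∫ s in (0:ℝ)..t,
          H s * (U s - ∑ j ∈ Finset.range k, ((-Complex.I)^j) • E j s))
        = (∫ s in (0:ℝ)..t, H s * U s)
          - ∑ j ∈ Finset.range k, ((-Complex.I)^j) • ∫ s in (0:ℝ)..t, H s * E j s := by
      have hptw : Set.EqOn
          (fun s => H s * (U s - ∑ j ∈ Finset.range k, ((-Complex.I)^j) • E j s))
          (fun s => H s * U s
            - ∑ j ∈ Finset.range k, ((-Complex.I)^j) • (H s * E j s))
          (Set.uIcc (0:ℝ) t) := by
        intro s _
        simp only [mul_sub, Finset.mul_sum, mul_smul_comm]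
      have hsum : IntervalIntegrable
          (fun x => ∑ j ∈ Finset.range k, ((-Complex.I)^j) • (H x * E j x))
          MeasureTheory.volume 0 t := by
        have := IntervalIntegrable.sum (Finset.range k) hintj
        rw [Finset.sum_fn] at this
        exact this
      rw [intervalIntegral.integral_congr hptw,
        intervalIntegral.integral_sub hint1 hsum,
        intervalIntegral.integral_finset_sum hintj]
      congr 1
      exact Finset.sum_congr rfl fun j _ => intervalIntegral.integral_smul _ _
    have hL : U t - ∑ j ∈ Finset.range (k+1), ((-Complex.I)^j) • E j t
        = (U t - 1) - ∑ j ∈ Finset.range k,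
            ((-Complex.I)^(j+1)) • ∫ s in (0:ℝ)..t, H s * E j s := by
      rw [Finset.sum_range_succ']
      have hc : ∀ j ∈ Finset.range k, ((-Complex.I)^(j+1)) • E (j+1) t
          = ((-Complex.I)^(j+1)) • ∫ s in (0:ℝ)..t, H s * E j s := by
        intro j _; rw [hEsucc j t ht]
      rw [Finset.sum_congr rfl hc, hE0]
      simp only [pow_zero, one_smul]
      abel
    rw [hL, heq, smul_sub, Finset.smul_sum, hftcU t ht, intervalIntegral.integral_smul]
    congr 1
    refine Finset.sum_congr rfl fun j _ => ?_
    rw [smul_smul, ← pow_succ']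
  -- the main inductive bound
  have hmain : ∀ k : ℕ, ∀ t ∈ Set.Icc (0:ℝ) T,
      ‖U t - ∑ j ∈ Finset.range k, ((-Complex.I)^j) • E j t‖
        ≤ g t ^ k / (Nat.factorial k : ℝ) := by
    intro k
    induction k with
    | zero =>
      intro t ht
      simpa using hUnorm t ht
    | succ k ih =>
      intro t ht
      have hWcont : ContinuousOn
          (fun s => U s - ∑ j ∈ Finset.range k, ((-Complex.I)^j) • E j s)
          (Set.Icc (0:ℝ) T) := by
        apply hUcont.sub
        apply continuousOn_finset_sum
        intro j _
        exact (hEcont j).const_smul ((-Complex.I)^j)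
      rw [hWrec k t ht, norm_smul]
      have hnegI : ‖(-Complex.I)‖ = 1 := by simp
      rw [hnegI, one_mul]
      have hb1 := intervalIntegral.norm_integral_le_integral_norm
        (f := fun s => H s * (U s - ∑ j ∈ Finset.range k, ((-Complex.I)^j) • E j s))
        (μ := MeasureTheory.volume) ht.1
      have hb2 : (∫ s in (0:ℝ)..t,
            ‖H s * (U s - ∑ j ∈ Finset.range k, ((-Complex.I)^j) • E j s)‖)
          ≤ ∫ s in (0:ℝ)..t, ‖H s‖ * (g s ^ k / (Nat.factorial k : ℝ)) := by
        apply intervalIntegral.integral_mono_on ht.1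
        · exact (hII _ (hHcont.mul hWcont) t ht).norm
        · exact hIIr _ (hHn.mul ((hgcont.pow k).div_const _)) t ht
        · intro x hx
          have hxm : x ∈ Set.Icc (0:ℝ) T := ⟨hx.1, hx.2.trans ht.2⟩
          exact le_trans (norm_mul_le _ _)
            (mul_le_mul_of_nonneg_left (ih x hxm) (norm_nonneg _))
      have hb3 : (∫ s in (0:ℝ)..t, ‖H s‖ * (g s ^ k / (Nat.factorial k : ℝ)))
          = g t ^ (k+1) / (Nat.factorial (k+1) : ℝ) := by
        have hfac : (0:ℝ) < (Nat.factorial k : ℝ) := by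
          exact_mod_cast Nat.factorial_pos k
        have h1 : ∀ s : ℝ, ‖H s‖ * (g s ^ k / (Nat.factorial k : ℝ))
            = (((k:ℝ)+1) * ‖H s‖ * g s ^ k) / (((k:ℝ)+1) * (Nat.factorial k : ℝ)) := by
          intro s
          have hk1 : ((k:ℝ)+1) ≠ 0 := by positivity
          field_simp
        simp only [h1]
        rw [intervalIntegral.integral_div, hkey k t ht, Nat.factorial_succ]
        push_cast
        ring_nf
      calc ‖∫ s in (0:ℝ)..t,
            H s * (U s - ∑ j ∈ Finset.range k, ((-Complex.I)^j) • E j s)‖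
          ≤ ∫ s in (0:ℝ)..t,
            ‖H s * (U s - ∑ j ∈ Finset.range k, ((-Complex.I)^j) • E j s)‖ := hb1
        _ ≤ ∫ s in (0:ℝ)..t, ‖H s‖ * (g s ^ k / (Nat.factorial k : ℝ)) := hb2
        _ = g t ^ (k+1) / (Nat.factorial (k+1) : ℝ) := hb3
  have := hmain (K+1) T hTmem
  rwa [hh]
end

section
/- Let k ≥ 1 and let H : [0, T] → Matrix (Fin N) (Fin N) ℂ be (k-1)-times continuously differentiable with H(t) Hermitian for all t, and let U(t) be its evolution operator with U(0) = 1. Then U is k-times continuously differentiable on [0, T], and ‖U^{(k)}(t)‖ ≤ a_k for all t ∈ [0, T], where a_0 := 1 and a_{m+1} := ∑_{j=0}^{m} (m choose j) · (sup_{s ∈ [0,T]} ‖H^{(j)}(s)‖) · a_{m-j} for 0 ≤ m ≤ k-1, with ‖·‖ the operator norm. -/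
open scoped Matrix.Norms.L2Operator
open Matrix

/-- **Bounds on higher derivatives of the evolution operator.** If `H` is `(k-1)`-times
continuously differentiable and Hermitian-valued on `[0, T]` and `U` is its evolution operator,
then `U` is `k`-times continuously differentiable on `[0, T]` and `‖U^{(k)}(t)‖ ≤ a k`,
where `a 0 = 1` and `a (m+1) = ∑_{j ≤ m} (m choose j) (sup_s ‖H^{(j)}(s)‖) a (m-j)`. -/
theorem evolution_higher_derivative_bound
    (N : ℕ) (T : ℝ) (hT : 0 < T) (k : ℕ) (hk : 1 ≤ k)
    (H : ℝ → Matrix (Fin N) (Fin N) ℂ)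
    (hHsmooth : ContDiffOn ℝ ((k - 1 : ℕ) : ℕ∞) H (Set.Icc (0 : ℝ) T))
    (hHherm : ∀ t ∈ Set.Icc (0 : ℝ) T, (H t).IsHermitian)
    (U : ℝ → Matrix (Fin N) (Fin N) ℂ) (hU0 : U 0 = 1)
    (hode : ∀ t ∈ Set.Icc (0 : ℝ) T,
      HasDerivWithinAt U ((-Complex.I) • (H t * U t)) (Set.Icc (0 : ℝ) T) t)
    (a : ℕ → ℝ) (ha0 : a 0 = 1)
    (haSucc : ∀ m : ℕ, m ≤ k - 1 → a (m + 1) =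
      ∑ j ∈ Finset.range (m + 1), (m.choose j : ℝ) *
        sSup ((fun s => ‖iteratedDerivWithin j H (Set.Icc (0 : ℝ) T) s‖) '' Set.Icc (0 : ℝ) T) *
        a (m - j)) :
    ContDiffOn ℝ (k : ℕ∞) U (Set.Icc (0 : ℝ) T) ∧
    ∀ t ∈ Set.Icc (0 : ℝ) T, ‖iteratedDerivWithin k U (Set.Icc (0 : ℝ) T) t‖ ≤ a k := by
  classical
  set s : Set ℝ := Set.Icc (0 : ℝ) T with hs_def
  have hs : UniqueDiffOn ℝ s := uniqueDiffOn_Icc hT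
  have h0s : (0 : ℝ) ∈ s := Set.left_mem_Icc.mpr hT.le
  have hconv : Convex ℝ s := convex_Icc _ _
  have hUcont : ContinuousOn U s := fun t ht => (hode t ht).continuousWithinAt
  -- U is unitary: (U t)ᴴ * U t = 1
  have hUU : ∀ t ∈ s, (U t)ᴴ * U t = 1 := by
    have hF : ∀ x ∈ s, HasDerivWithinAt (fun y => (U y)ᴴ * (U y)) 0 s x := by
      intro x hx
      have hU' := hode x hx
      have hstar : HasDerivWithinAt (fun y => (U y)ᴴ)
          (((-Complex.I) • (H x * U x))ᴴ) s x := by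
        simpa [Matrix.star_eq_conjTranspose] using hU'.star
      have hmul := hstar.mul hU'
      refine hmul.congr_deriv ?_
      have hH : (H x)ᴴ = H x := hHherm x hx
      simp only [Matrix.conjTranspose_smul, Matrix.conjTranspose_mul, hH,
        smul_mul_assoc, mul_smul_comm, mul_assoc]
      simp [neg_smul, mul_assoc]
    intro t ht
    have hle := hconv.norm_image_sub_le_of_norm_hasDerivWithin_le (C := 0) hF
      (fun x hx => by simp) h0s ht
    have : (U t)ᴴ * U t = (U 0)ᴴ * U 0 := by
      have h0 : ‖(U t)ᴴ * U t - (U 0)ᴴ * U 0‖ ≤ 0 := by simpa using hle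
      have := le_antisymm h0 (norm_nonneg _)
      rwa [norm_eq_zero, sub_eq_zero] at this
    rw [this, hU0]
    simp
  -- norm of U is at most 1
  have hU1 : ∀ t ∈ s, ‖U t‖ ≤ 1 := by
    intro t ht
    rcases subsingleton_or_nontrivial (Matrix (Fin N) (Fin N) ℂ) with hss | hnt
    · rw [Subsingleton.elim (U t) 0, norm_zero]; norm_num
    · have h2 : ‖U t‖ * ‖U t‖ = 1 := by
        rw [← CStarRing.norm_star_mul_self, Matrix.star_eq_conjTranspose, hUU t ht, norm_one]
      nlinarith [norm_nonneg (U t)]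
  -- bounds for derivatives of H
  set M : ℕ → ℝ := fun j => sSup ((fun u => ‖iteratedDerivWithin j H s u‖) '' s) with hM_def
  have hMle : ∀ j, j ≤ k - 1 → ∀ t ∈ s, ‖iteratedDerivWithin j H s t‖ ≤ M j := by
    intro j hj t ht
    apply le_csSup
    · have hc : ContinuousOn (fun u => ‖iteratedDerivWithin j H s u‖) s :=
        (hHsmooth.continuousOn_iteratedDerivWithin (by exact_mod_cast hj) hs).norm
      exact (isCompact_Icc.image_of_continuousOn hc).bddAbove
    · exact ⟨t, ht, rfl⟩
  have hM0 : ∀ j, j ≤ k - 1 → 0 ≤ M j :=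
    fun j hj => le_trans (norm_nonneg _) (hMle j hj 0 h0s)
  -- a is nonnegative
  have ha_nonneg : ∀ m, m ≤ k → 0 ≤ a m := by
    intro m
    induction m using Nat.strong_induction_on with
    | _ m ih =>
      intro hm
      match m with
      | 0 => rw [ha0]; norm_num
      | Nat.succ m =>
        rw [haSucc m (by omega)]
        apply Finset.sum_nonneg
        intro j hj
        have hjm : j ≤ m := by have := Finset.mem_range.mp hj; omega
        exact mul_nonneg (mul_nonneg (by positivity) (hM0 j (by omega)))
          (ih (m - j) (by omega) (by omega))
  -- main induction
  have main : ∀ m, m ≤ k → ContDiffOn ℝ (m : ℕ∞) U s ∧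
      ∀ i, i ≤ m → ∀ t ∈ s, ‖iteratedDerivWithin i U s t‖ ≤ a i := by
    intro m
    induction m with
    | zero =>
      intro _
      refine ⟨by exact_mod_cast contDiffOn_zero.mpr hUcont, ?_⟩
      intro i hi t ht
      interval_cases i
      rw [iteratedDerivWithin_zero, ha0]
      exact hU1 t ht
    | succ m ih =>
      intro hm
      obtain ⟨hCm, hbound⟩ := ih (by omega)
      have hmk1 : m ≤ k - 1 := by omega
      have hHm : ContDiffOn ℝ (m : ℕ∞) H s := hHsmooth.of_le (by exact_mod_cast hmk1)
      have hGm : ContDiffOn ℝ (m : ℕ∞) (fun t => (-Complex.I) • (H t * U t)) s :=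
        (hHm.mul hCm).const_smul _
      have hEq : Set.EqOn (derivWithin U s) (fun t => (-Complex.I) • (H t * U t)) s :=
        fun x hx => (hode x hx).derivWithin (hs x hx)
      have hC : ContDiffOn ℝ ((m + 1 : ℕ) : ℕ∞) U s := by
        have : ((((m + 1 : ℕ)) : ℕ∞) : WithTop ℕ∞) = ((m : ℕ∞) : WithTop ℕ∞) + 1 := by
          push_cast; ring
        rw [show ((((m + 1 : ℕ)) : ℕ∞) : WithTop ℕ∞) = ((m : ℕ∞) : WithTop ℕ∞) + 1 from this] at *
        rw [contDiffOn_succ_iff_derivWithin hs]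
        refine ⟨fun x hx => (hode x hx).differentiableWithinAt, ?_, hGm.congr hEq⟩
        intro h
        exact absurd h (by exact_mod_cast (by simp : ((m : ℕ∞) : WithTop ℕ∞) ≠ ⊤))
      refine ⟨hC, ?_⟩
      intro i hi t ht
      rcases Nat.lt_succ_iff_lt_or_eq.mp (Nat.lt_succ_of_le hi) with hlt | heq
      · exact hbound i (by omega) t ht
      · subst heq
        rw [iteratedDerivWithin_succ', iteratedDerivWithin_congr hEq ht]
        have hsmul : iteratedDerivWithin m (fun t => (-Complex.I) • (H t * U t)) s t
            = (-Complex.I) • iteratedDerivWithin m (fun t => H t * U t) s t :=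
          iteratedDerivWithin_const_smul ht hs (-Complex.I) ((hHm.mul hCm) t ht)
        rw [hsmul, norm_smul]
        have hnI : ‖-Complex.I‖ = 1 := by simp
        rw [hnI, one_mul]
        have hmul := norm_iteratedFDerivWithin_mul_le (𝕜 := ℝ) hHm hCm hs ht
          (le_refl ((m : ℕ∞) : WithTop ℕ∞))
        rw [← norm_iteratedFDerivWithin_eq_norm_iteratedDerivWithin]
        refine le_trans hmul ?_
        rw [haSucc m hmk1]
        apply Finset.sum_le_sum
        intro j hj
        have hjm : j ≤ m := by have := Finset.mem_range.mp hj; omega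
        rw [norm_iteratedFDerivWithin_eq_norm_iteratedDerivWithin,
          norm_iteratedFDerivWithin_eq_norm_iteratedDerivWithin]
        have h1 : ‖iteratedDerivWithin j H s t‖ ≤ M j := hMle j (by omega) t ht
        have h2 : ‖iteratedDerivWithin (m - j) U s t‖ ≤ a (m - j) :=
          hbound (m - j) (by omega) t ht
        have hc0 : (0 : ℝ) ≤ (m.choose j : ℝ) := by positivity
        exact mul_le_mul (mul_le_mul_of_nonneg_left h1 hc0) h2 (norm_nonneg _)
          (mul_nonneg hc0 (hM0 j (by omega)))
  obtain ⟨hCk, hbk⟩ := main k le_rfl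
  exact ⟨hCk, fun t ht => hbk k le_rfl t ht⟩
end

section
/- Let H : [0, T] → Matrix (Fin N) (Fin N) ℂ be continuously differentiable with H(t) Hermitian for all t, with ‖H(t)‖ ≤ Λ and ‖H'(t)‖ ≤ Λ' for all t ∈ [0, T], and let U(t) be its evolution operator with U(0) = 1. Then U is twice continuously differentiable and ‖U''(t)‖ ≤ Λ² + Λ' for all t ∈ [0, T], where ‖·‖ is the operator norm. -/
open scoped Matrix.Norms.L2Operator
open Matrix

/-- **Second-derivative bound for the evolution operator.** If `H` is continuously
differentiable and Hermitian-valued on `[0, T]` with `‖H(t)‖ ≤ Λ` and `‖H'(t)‖ ≤ Λ'`, and `U`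
is its evolution operator, then `U` is twice continuously differentiable and
`‖U''(t)‖ ≤ Λ² + Λ'` on `[0, T]`. -/
theorem evolution_second_derivative_bound
    (N : ℕ) (T : ℝ) (hT : 0 < T) (Λ Λ' : ℝ)
    (H : ℝ → Matrix (Fin N) (Fin N) ℂ)
    (hHsmooth : ContDiffOn ℝ 1 H (Set.Icc (0 : ℝ) T))
    (hHherm : ∀ t ∈ Set.Icc (0 : ℝ) T, (H t).IsHermitian)
    (hHbound : ∀ t ∈ Set.Icc (0 : ℝ) T, ‖H t‖ ≤ Λ)
    (hH'bound : ∀ t ∈ Set.Icc (0 : ℝ) T, ‖derivWithin H (Set.Icc (0 : ℝ) T) t‖ ≤ Λ')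
    (U : ℝ → Matrix (Fin N) (Fin N) ℂ) (hU0 : U 0 = 1)
    (hode : ∀ t ∈ Set.Icc (0 : ℝ) T,
      HasDerivWithinAt U ((-Complex.I) • (H t * U t)) (Set.Icc (0 : ℝ) T) t) :
    ContDiffOn ℝ 2 U (Set.Icc (0 : ℝ) T) ∧
    ∀ t ∈ Set.Icc (0 : ℝ) T,
      ‖iteratedDerivWithin 2 U (Set.Icc (0 : ℝ) T) t‖ ≤ Λ ^ 2 + Λ' := by
  set s : Set ℝ := Set.Icc (0 : ℝ) T with hs_def
  have hs : UniqueDiffOn ℝ s := uniqueDiffOn_Icc hT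
  have h0s : (0 : ℝ) ∈ s := Set.left_mem_Icc.2 hT.le
  have hconv : Convex ℝ s := convex_Icc 0 T
  -- basic regularity facts
  have hUdiff : DifferentiableOn ℝ U s := fun t ht =>
    (hode t ht).differentiableWithinAt
  have hUcont : ContinuousOn U s := hUdiff.continuousOn
  have hHderiv : ∀ t ∈ s, HasDerivWithinAt H (derivWithin H s t) s t := fun t ht =>
    ((hHsmooth.differentiableOn one_ne_zero) t ht).hasDerivWithinAt
  -- unitarity
  have hzero : ∀ t ∈ s, HasDerivWithinAt (fun t => star (U t) * U t) (0 : Matrix (Fin N) (Fin N) ℂ) s t := by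
    intro t ht
    have h1 := ((hode t ht).star.mul (hode t ht))
    have heq : star ((-Complex.I) • (H t * U t)) * U t
        + star (U t) * ((-Complex.I) • (H t * U t)) = 0 := by
      have hH : star (H t) = H t := hHherm t ht
      simp [star_smul, StarMul.star_mul, hH, smul_mul_assoc, mul_smul_comm, mul_assoc]
    rwa [heq] at h1
  have hUU : ∀ t ∈ s, star (U t) * U t = 1 := by
    intro t ht
    have := Convex.norm_image_sub_le_of_norm_hasDerivWithin_le (C := 0) hzero
      (fun x _ => by simp) hconv h0s ht
    simp only [zero_mul] at this
    have h2 : star (U t) * U t = star (U 0) * U 0 := by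
      have := norm_le_zero_iff.mp this
      linear_combination (norm := module) this
    rw [h2, hU0]; simp
  have hnorm1 : ‖(1 : Matrix (Fin N) (Fin N) ℂ)‖ ≤ 1 := by
    have h := CStarRing.norm_star_mul_self (x := (1 : Matrix (Fin N) (Fin N) ℂ))
    simp only [star_one, one_mul] at h
    nlinarith [norm_nonneg (1 : Matrix (Fin N) (Fin N) ℂ)]
  have hUnorm : ∀ t ∈ s, ‖U t‖ ≤ 1 := by
    intro t ht
    have h := CStarRing.norm_star_mul_self (x := U t)
    rw [hUU t ht] at h
    nlinarith [norm_nonneg (U t)]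
  -- derivative formula
  have hderivU : ∀ t ∈ s, derivWithin U s t = (-Complex.I) • (H t * U t) := fun t ht =>
    (hode t ht).derivWithin (hs t ht)
  -- U is C¹
  have hUC1 : ContDiffOn ℝ 1 U s := by
    rw [show (1 : WithTop ℕ∞) = 0 + 1 from rfl, contDiffOn_succ_iff_derivWithin hs]
    refine ⟨hUdiff, by simp, ?_⟩
    rw [contDiffOn_zero]
    exact ContinuousOn.congr
      (((hHsmooth.continuousOn.mul hUcont).const_smul (-Complex.I))) hderivU
  -- U is C²
  have hUC2 : ContDiffOn ℝ 2 U s := by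
    rw [show (2 : WithTop ℕ∞) = 1 + 1 from rfl, contDiffOn_succ_iff_derivWithin hs]
    refine ⟨hUdiff, by simp, ?_⟩
    exact ContDiffOn.congr ((hHsmooth.mul hUC1).const_smul (-Complex.I)) hderivU
  refine ⟨hUC2, ?_⟩
  intro t ht
  -- second derivative value
  have hD : HasDerivWithinAt (fun t => (-Complex.I) • (H t * U t))
      ((-Complex.I) • (derivWithin H s t * U t + H t * ((-Complex.I) • (H t * U t)))) s t :=
    (((hHderiv t ht).mul (hode t ht)).const_smul (-Complex.I))
  have h2 : iteratedDerivWithin 2 U s t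
      = (-Complex.I) • (derivWithin H s t * U t + H t * ((-Complex.I) • (H t * U t))) := by
    have h1fun : ∀ x ∈ s, iteratedDerivWithin 1 U s x = (-Complex.I) • (H x * U x) := by
      intro x hx
      rw [iteratedDerivWithin_one]
      exact hderivU x hx
    rw [iteratedDerivWithin_succ, derivWithin_congr h1fun (h1fun t ht)]
    exact hD.derivWithin (hs t ht)
  rw [h2]
  have hΛ : 0 ≤ Λ := le_trans (norm_nonneg _) (hHbound 0 h0s)
  have hΛ' : 0 ≤ Λ' := le_trans (norm_nonneg _) (hH'bound 0 h0s)
  have hUt := hUnorm t ht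
  have hHt := hHbound t ht
  have hH't := hH'bound t ht
  have hUnn := norm_nonneg (U t)
  have hHnn := norm_nonneg (H t)
  calc ‖(-Complex.I) • (derivWithin H s t * U t + H t * ((-Complex.I) • (H t * U t)))‖
      = ‖derivWithin H s t * U t + H t * ((-Complex.I) • (H t * U t))‖ := by
        rw [norm_smul]; simp
    _ ≤ ‖derivWithin H s t * U t‖ + ‖H t * ((-Complex.I) • (H t * U t))‖ := norm_add_le _ _
    _ ≤ ‖derivWithin H s t‖ * ‖U t‖ + ‖H t‖ * ‖(-Complex.I) • (H t * U t)‖ :=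
        add_le_add (norm_mul_le _ _) (norm_mul_le _ _)
    _ = ‖derivWithin H s t‖ * ‖U t‖ + ‖H t‖ * ‖H t * U t‖ := by rw [norm_smul]; simp
    _ ≤ ‖derivWithin H s t‖ * ‖U t‖ + ‖H t‖ * (‖H t‖ * ‖U t‖) := by
        gcongr; exact norm_mul_le _ _
    _ ≤ Λ ^ 2 + Λ' := by
        have e1 : ‖derivWithin H s t‖ * ‖U t‖ ≤ Λ' := by
          nlinarith [norm_nonneg (derivWithin H s t)]
        have e2 : ‖H t‖ * (‖H t‖ * ‖U t‖) ≤ Λ ^ 2 := by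
          have h3 : ‖H t‖ * ‖H t‖ ≤ Λ * Λ := mul_le_mul hHt hHt hHnn hΛ
          nlinarith [mul_nonneg hHnn hHnn]
        linarith
end
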